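/- For every n ≥ 4, the relator set R^V(n+1) ⊆ F_{n+1} equals the union ⋃_{k=0}^{n} π_k·R^V(n), where π_0 is the identity permutation of {1,…,n+1}, π_k = τ_{n−k+1}∘τ_{n−k+2}∘⋯∘τ_n for 1 ≤ k ≤ n with τ_j the transposition (j, j+1), each permutation σ acts on F_{n+1} via the automorphism sending λ_{i,j} to λ_{σ(i),σ(j)}, and R^V(n) ⊆ F_{n+1} via the canonical inclusion F_n → F_{n+1}. (These π_k are the coset representatives of S_n in S_{n+1}, so the defining relations of VP_{n+1} are obtained from those of VP_n by conjugating by the elements ρ_n, ρ_nρ_{n−1}, …, ρ_nρ_{n−1}⋯ρ_1 of VB_{n+1}.) -/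

import Mathlib

/-- The ambient free group with generators `λ i j` indexed by ordered pairs of naturals;
the sub-free-group `F_m` is spanned by the generators `lam i j` with `1 ≤ i ≠ j ≤ m`,
and the canonical inclusion `F_m → F_{m'}` is the identity on generators. -/
abbrev FG : Type := FreeGroup (ℕ × ℕ)

/-- The generator `λ_{i,j}`. -/
def lam (i j : ℕ) : FG := FreeGroup.of (i, j)

/-- The commutativity relators `λ_{i,j} λ_{k,l} λ_{i,j}⁻¹ λ_{k,l}⁻¹` of `VP_m`,
for pairwise distinct indices `1 ≤ i, j, k, l ≤ m`. -/
def CR (m : ℕ) : Set FG :=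
  {w | ∃ i j k l : ℕ,
    1 ≤ i ∧ i ≤ m ∧ 1 ≤ j ∧ j ≤ m ∧ 1 ≤ k ∧ k ≤ m ∧ 1 ≤ l ∧ l ≤ m ∧
    i ≠ j ∧ i ≠ k ∧ i ≠ l ∧ j ≠ k ∧ j ≠ l ∧ k ≠ l ∧
    w = lam i j * lam k l * (lam i j)⁻¹ * (lam k l)⁻¹}

/-- The long relators `λ_{k,i} λ_{k,j} λ_{i,j} λ_{k,i}⁻¹ λ_{k,j}⁻¹ λ_{i,j}⁻¹` of `VP_m`,
for pairwise distinct indices `1 ≤ i, j, k ≤ m`. -/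
def LongR (m : ℕ) : Set FG :=
  {w | ∃ i j k : ℕ,
    1 ≤ i ∧ i ≤ m ∧ 1 ≤ j ∧ j ≤ m ∧ 1 ≤ k ∧ k ≤ m ∧
    i ≠ j ∧ i ≠ k ∧ j ≠ k ∧
    w = lam k i * lam k j * lam i j * (lam k i)⁻¹ * (lam k j)⁻¹ * (lam i j)⁻¹}

/-- The full relator set `R^V(m)` of the virtual pure braid group `VP_m`. -/
def RV (m : ℕ) : Set FG := CR m ∪ LongR m

/-- Value of `S_{i-1}` on a generator, given by the displayed case formulas:
for `k < l`, `S_{i-1}(λ_{k,l})` and `S_{i-1}(λ_{l,k})` according to the position of `i`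
relative to `k` and `l`. -/
def Sgen (i : ℕ) (p : ℕ × ℕ) : FG :=
  if p.1 < p.2 then
    -- the generator is `λ_{k,l}` with `k = p.1 < l = p.2`
    if i < p.1 then lam (p.1 + 1) (p.2 + 1)
    else if i = p.1 then lam p.1 (p.2 + 1) * lam (p.1 + 1) (p.2 + 1)
    else if i < p.2 then lam p.1 (p.2 + 1)
    else if i = p.2 then lam p.1 (p.2 + 1) * lam p.1 p.2
    else lam p.1 p.2
  else if p.2 < p.1 then
    -- the generator is `λ_{l,k}` with `k = p.2 < l = p.1`
    if i < p.2 then lam (p.1 + 1) (p.2 + 1)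
    else if i = p.2 then lam (p.1 + 1) (p.2 + 1) * lam (p.1 + 1) p.2
    else if i < p.1 then lam (p.1 + 1) p.2
    else if i = p.1 then lam p.1 p.2 * lam (p.1 + 1) p.2
    else lam p.1 p.2
  else lam p.1 p.2

/-- The free-group homomorphism `S_t = S_{(t+1)-1} : F_m → F_{m+1}` (doubling the
`(t+1)`-st strand), determined on generators by the displayed case formulas. -/
def Smap (t : ℕ) : FG →* FG := FreeGroup.lift (Sgen (t + 1))

/-- The relator `u * v⁻¹` of a relation `u = v`. -/
def relOf (u v : FG) : FG := u * v⁻¹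

/-- The set `R_{i,j,k}` of the six long relators with indices in `{i, j, k}`. -/
def Rtriple (i j k : ℕ) : Set FG :=
  {relOf (lam i j * lam i k * lam j k) (lam j k * lam i k * lam i j),
   relOf (lam j i * lam j k * lam i k) (lam i k * lam j k * lam j i),
   relOf (lam i k * lam i j * lam k j) (lam k j * lam i j * lam i k),
   relOf (lam k i * lam k j * lam i j) (lam i j * lam k j * lam k i),
   relOf (lam j k * lam j i * lam k i) (lam k i * lam j i * lam j k),
   relOf (lam k j * lam k i * lam j i) (lam j i * lam k i * lam k j)}

/-- The commutator `[a,b] = a⁻¹ b⁻¹ a b`. -/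
def commE (a b : FG) : FG := a⁻¹ * b⁻¹ * a * b

/-- The automorphism of the free group induced by a permutation of the indices:
`λ_{i,j} ↦ λ_{σ(i),σ(j)}`. -/
def permF (σ : Equiv.Perm ℕ) : FG →* FG :=
  FreeGroup.lift (fun p => lam (σ p.1) (σ p.2))

/-- The transposition `τ_j = (j, j+1)`. -/
def tau (j : ℕ) : Equiv.Perm ℕ := Equiv.swap j (j + 1)

/-- The coset representatives `π_0 = id`, `π_k = τ_{n-k+1} ∘ τ_{n-k+2} ∘ ⋯ ∘ τ_n`
(the rightmost transposition `τ_n` being applied first). -/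
def pil (n : ℕ) : ℕ → Equiv.Perm ℕ
  | 0 => 1
  | k + 1 => tau (n - k) * pil n k

/-! A relator of `R^V(n+1)` involves at most four of the `n + 1 ≥ 5` indices, so some index `a`
is missing from it. The permutation `π_{n+1-a}` maps `{1, …, n}` monotonically onto
`{1, …, n+1} \ {a}`, and permuting indices is equivariant for the relator sets, so the relator
is the image under `π_{n+1-a}` of a relator of `R^V(n)`. -/

def commRel (i j k l : ℕ) : FG := lam i j * lam k l * (lam i j)⁻¹ * (lam k l)⁻¹

def longRel (i j k : ℕ) : FG :=
  lam k i * lam k j * lam i j * (lam k i)⁻¹ * (lam k j)⁻¹ * (lam i j)⁻¹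

def CRon (s : Set ℕ) : Set FG :=
  {w | ∃ i j k l, [i, j, k, l].Nodup ∧ {i, j, k, l} ⊆ s ∧ w = commRel i j k l}

def LongRon (s : Set ℕ) : Set FG :=
  {w | ∃ i j k, [i, j, k].Nodup ∧ {i, j, k} ⊆ s ∧ w = longRel i j k}

def RVon (s : Set ℕ) : Set FG := CRon s ∪ LongRon s

theorem CR_eq_CRon (m : ℕ) : CR m = CRon (Set.Icc 1 m) := by
  ext w
  simp only [CR, CRon, commRel, Set.insert_subset_iff, Set.singleton_subset_iff, Set.mem_Icc,
    List.nodup_cons, List.mem_cons, List.not_mem_nil, List.nodup_nil, Set.mem_ofPred_eq]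
  constructor <;> rintro ⟨i, j, k, l, h⟩ <;> exact ⟨i, j, k, l, by grind⟩

theorem LongR_eq_LongRon (m : ℕ) : LongR m = LongRon (Set.Icc 1 m) := by
  ext w
  simp only [LongR, LongRon, longRel, Set.insert_subset_iff, Set.singleton_subset_iff,
    Set.mem_Icc, List.nodup_cons, List.mem_cons, List.not_mem_nil, List.nodup_nil,
    Set.mem_ofPred_eq]
  constructor <;> rintro ⟨i, j, k, h⟩ <;> exact ⟨i, j, k, by grind⟩

theorem RV_eq_RVon (m : ℕ) : RV m = RVon (Set.Icc 1 m) := by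
  rw [RV, RVon, CR_eq_CRon, LongR_eq_LongRon]

theorem RVon_mono {s t : Set ℕ} (h : s ⊆ t) : RVon s ⊆ RVon t := by
  rintro w (⟨i, j, k, l, hnd, hs, rfl⟩ | ⟨i, j, k, hnd, hs, rfl⟩)
  · exact Or.inl ⟨i, j, k, l, hnd, hs.trans h, rfl⟩
  · exact Or.inr ⟨i, j, k, hnd, hs.trans h, rfl⟩

theorem RVon_eq_biUnion_sdiff_singleton (s : Finset ℕ) (hs : 4 < s.card) :
    RVon s = ⋃ a ∈ s, RVon (↑s \ {a}) := by
  refine subset_antisymm ?_ (Set.iUnion₂_subset fun a _ => RVon_mono Set.sdiff_subset)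
  rintro w (⟨i, j, k, l, hnd, hsub, rfl⟩ | ⟨i, j, k, hnd, hsub, rfl⟩)
  · obtain ⟨a, has, ha⟩ := Finset.exists_mem_notMem_of_card_lt_card
      (Finset.card_le_four.trans_lt hs : ({i, j, k, l} : Finset ℕ).card < s.card)
    refine Set.mem_biUnion has
      (Or.inl ⟨i, j, k, l, hnd, Set.subset_sdiff_singleton hsub ?_, rfl⟩)
    simpa using ha
  · obtain ⟨a, has, ha⟩ := Finset.exists_mem_notMem_of_card_lt_card
      ((Finset.card_le_three.trans_lt (by omega)) : ({i, j, k} : Finset ℕ).card < s.card)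
    refine Set.mem_biUnion has
      (Or.inr ⟨i, j, k, hnd, Set.subset_sdiff_singleton hsub ?_, rfl⟩)
    simpa using ha

section Equivariance

variable (σ : Equiv.Perm ℕ)

@[simp]
theorem permF_lam (a b : ℕ) : permF σ (lam a b) = lam (σ a) (σ b) :=
  FreeGroup.lift_apply_of

@[simp]
theorem permF_commRel (i j k l : ℕ) :
    permF σ (commRel i j k l) = commRel (σ i) (σ j) (σ k) (σ l) := by
  simp [commRel]

@[simp]
theorem permF_longRel (i j k : ℕ) : permF σ (longRel i j k) = longRel (σ i) (σ j) (σ k) := by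
  simp [longRel]

theorem image_permF_RVon (s : Set ℕ) : permF σ '' RVon s = RVon (σ '' s) := by
  ext w
  constructor
  · rintro ⟨_, ⟨i, j, k, l, hnd, hs, rfl⟩ | ⟨i, j, k, hnd, hs, rfl⟩, rfl⟩
    · refine Or.inl ⟨σ i, σ j, σ k, σ l, hnd.map σ.injective, ?_, by simp⟩
      simpa [Set.image_insert_eq] using Set.image_mono (f := σ) hs
    · refine Or.inr ⟨σ i, σ j, σ k, hnd.map σ.injective, ?_, by simp⟩
      simpa [Set.image_insert_eq] using Set.image_mono (f := σ) hs
  · rintro (⟨i, j, k, l, hnd, hs, rfl⟩ | ⟨i, j, k, hnd, hs, rfl⟩)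
    · refine ⟨commRel (σ.symm i) (σ.symm j) (σ.symm k) (σ.symm l),
        Or.inl ⟨_, _, _, _, hnd.map σ.symm.injective, ?_, rfl⟩, by simp⟩
      simpa [Set.image_insert_eq] using Set.image_mono (f := σ.symm) hs
    · refine ⟨longRel (σ.symm i) (σ.symm j) (σ.symm k),
        Or.inr ⟨_, _, _, hnd.map σ.symm.injective, ?_, rfl⟩, by simp⟩
      simpa [Set.image_insert_eq] using Set.image_mono (f := σ.symm) hs

end Equivariance

theorem pil_apply (n k x : ℕ) (hk : k ≤ n) (hx : x ≤ n) :
    pil n k x = if n - k < x then x + 1 else x := by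
  induction k with
  | zero => simpa [pil] using hx
  | succ k ih =>
    rw [pil, Equiv.Perm.mul_apply, ih (by omega), tau, Equiv.swap_apply_def]
    split_ifs <;> omega

theorem image_pil_Icc (n k : ℕ) (hk : k ≤ n) :
    pil n k '' Set.Icc 1 n = Set.Icc 1 (n + 1) \ {n + 1 - k} := by
  ext x
  simp only [Set.mem_image, Set.mem_Icc, Set.mem_sdiff, Set.mem_singleton_iff]
  constructor
  · rintro ⟨y, hy, rfl⟩
    rw [pil_apply n k y hk hy.2]
    split_ifs <;> omega
  · rintro ⟨hx, hxk⟩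
    by_cases h : x ≤ n - k
    · exact ⟨x, by omega, by rw [pil_apply n k x hk (by omega), if_neg (by omega)]⟩
    · refine ⟨x - 1, by omega, ?_⟩
      rw [pil_apply n k (x - 1) hk (by omega), if_pos (by omega)]
      omega

theorem range_image_succ_sub (n : ℕ) :
    (Finset.range (n + 1)).image (n + 1 - ·) = Finset.Icc 1 (n + 1) := by
  rw [Finset.range_eq_Ico, Nat.Ico_image_const_sub_eq_Ico (Nat.zero_le _)]
  ext x
  simp only [Finset.mem_Ico, Finset.mem_Icc]
  omega

/-- for every `n ≥ 4`, `R^V(n+1) = ⋃_{k=0}^{n} π_k · R^V(n)`, where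
each permutation acts on `F_{n+1}` by `λ_{i,j} ↦ λ_{σ(i),σ(j)}`. -/
theorem RV_succ_decomposition (n : ℕ) (hn : 4 ≤ n) :
    RV (n + 1) = ⋃ k ∈ Finset.range (n + 1), (permF (pil n k)) '' (RV n) := by
  calc RV (n + 1) = RVon ↑(Finset.Icc 1 (n + 1)) := by rw [RV_eq_RVon, Finset.coe_Icc]
    _ = ⋃ a ∈ Finset.Icc 1 (n + 1), RVon (Set.Icc 1 (n + 1) \ {a}) := by
      rw [RVon_eq_biUnion_sdiff_singleton _ (by rw [Nat.card_Icc]; omega), Finset.coe_Icc]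
    _ = ⋃ k ∈ Finset.range (n + 1), RVon (Set.Icc 1 (n + 1) \ {n + 1 - k}) := by
      rw [← range_image_succ_sub, Finset.set_biUnion_finset_image]
    _ = ⋃ k ∈ Finset.range (n + 1), (permF (pil n k)) '' (RV n) := by
      refine Set.iUnion₂_congr fun k hk => ?_
      rw [RV_eq_RVon, image_permF_RVon, image_pil_Icc n k (Finset.mem_range_succ_iff.mp hk)]
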